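/- With v_1, v_2, v_3 defined by the recursive Mex algorithm, for every n ≥ 1 the maximum of F_n equals v_3(n), and v_3(n) = v_2(n) + Mex(D_{n-1}). -/

import Mathlib

/-- Minimum excluded value of a set of natural numbers. -/
noncomputable def mex (S : Set ℕ) : ℕ := sInf {m : ℕ | m ∉ S}

/-- Coordinates of a set of triples. -/
def coords (G : Set (ℕ × ℕ × ℕ)) : Set ℕ :=
  {k | ∃ x ∈ G, k = x.1 ∨ k = x.2.1 ∨ k = x.2.2}

/-- Pairwise coordinate differences of a set of triples. -/
def diffs (G : Set (ℕ × ℕ × ℕ)) : Set ℕ :=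
  {d | ∃ x ∈ G, d = x.2.1 - x.1 ∨ d = x.2.2 - x.2.1 ∨ d = x.2.2 - x.1}

/-- One step of the Mex algorithm: the next P-position. -/
noncomputable def step (G : Set (ℕ × ℕ × ℕ)) : ℕ × ℕ × ℕ :=
  let F := coords G
  let D := diffs G
  let a := mex F
  let b := mex ((fun d => a + d) '' D ∪ Set.Icc 1 a ∪ F)
  let c := mex ((fun d => b + d) '' D ∪ Set.Icc 1 b ∪ F)
  (a, b, c)

/-- The sets `G_n` of P-positions computed by the Mex algorithm. -/
noncomputable def Gset : ℕ → Set (ℕ × ℕ × ℕ)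
  | 0 => {(0, 0, 0)}
  | n + 1 => Gset n ∪ {step (Gset n)}

/-- The `n`-th P-position `(v_1(n), v_2(n), v_3(n))`. -/
noncomputable def v : ℕ → ℕ × ℕ × ℕ
  | 0 => (0, 0, 0)
  | n + 1 => step (Gset n)

noncomputable def v1 (n : ℕ) : ℕ := (v n).1
noncomputable def v2 (n : ℕ) : ℕ := (v n).2.1
noncomputable def v3 (n : ℕ) : ℕ := (v n).2.2

/-- `F_n`: the set of coordinates of elements of `G_n`. -/
noncomputable def Fset (n : ℕ) : Set ℕ := coords (Gset n)

/-- `D_n`: the set of pairwise coordinate differences over `G_n`. -/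
noncomputable def Dset (n : ℕ) : Set ℕ := diffs (Gset n)


/-!
Write `(a, b, c) = v(n+1)` and `μ = Mex(D_n)`. The set excluded for `b` contains `[1, a]` and
`a + [0, μ)`, so `b ≥ a + μ`, and likewise `c ≥ b + μ`. By induction on `n` we maintain:
all differences `v₂(k) - v₁(k)` and `v₃(k) - v₂(k)` with `k ≤ n` are `< μ`, the differences
`v₃(k) - v₁(k)` grow by at least `2` with `k`, and `v₃(n) = max F_n`. The first two facts give
`v₃(n) < b + μ`, so `b + μ` is not excluded and `c = b + μ`.

To push the bound on `b - a` to `n + 1` one needs `[0, b - a) ⊆ D_n ∪ {μ}`. An element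
`a + e < b` with `e ∉ D_n` must be a coordinate, and beyond `a + μ` only coordinates `v₃(k)` are
left. If some `v₃(j)` lay in `(a + μ, b)`, then `a + μ` would be some `v₃(i)`, and since the
`v₃` are `3` apart, `μ + 1` and `μ + 2` would both be differences, hence two consecutive values
of `v₃ - v₁`, contradicting the gap of `2`.
-/

section Mex

variable {S T : Set ℕ} {k : ℕ}

lemma mex_le_of_notMem (h : k ∉ S) : mex S ≤ k := Nat.sInf_le h

lemma mem_of_lt_mex (h : k < mex S) : k ∈ S :=
  not_not.mp fun hk => (mex_le_of_notMem hk).not_gt h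

lemma mex_notMem (hS : S.Finite) : mex S ∉ S :=
  Nat.sInf_mem (s := Sᶜ) hS.infinite_compl.nonempty

lemma le_mex (hS : S.Finite) (h : ∀ j < k, j ∈ S) : k ≤ mex S :=
  not_lt.mp fun hlt => mex_notMem hS (h _ hlt)

lemma mex_pos (hS : S.Finite) (h0 : 0 ∈ S) : 0 < mex S :=
  Nat.pos_of_ne_zero fun h => mex_notMem hS (h ▸ h0)

lemma mex_mono (hT : T.Finite) (h : S ⊆ T) : mex S ≤ mex T :=
  mex_le_of_notMem fun hS => mex_notMem hT (h hS)

end Mex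

lemma mem_Gset {n : ℕ} {x : ℕ × ℕ × ℕ} : x ∈ Gset n ↔ ∃ k ≤ n, v k = x := by
  induction n with
  | zero => simp [Gset, v, eq_comm]
  | succ n ih =>
    rw [Gset, Set.mem_union, ih, Set.mem_singleton_iff]
    constructor
    · rintro (⟨k, hk, rfl⟩ | rfl)
      exacts [⟨k, hk.trans n.le_succ, rfl⟩, ⟨n + 1, le_rfl, rfl⟩]
    · rintro ⟨k, hk, rfl⟩
      rcases Nat.le_add_one_iff.mp hk with hk | rfl
      exacts [Or.inl ⟨k, hk, rfl⟩, Or.inr rfl]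

lemma mem_Fset {n m : ℕ} : m ∈ Fset n ↔ ∃ k ≤ n, m = v1 k ∨ m = v2 k ∨ m = v3 k := by
  simp [Fset, coords, mem_Gset, v1, v2, v3]

lemma mem_Dset {n d : ℕ} :
    d ∈ Dset n ↔ ∃ k ≤ n, d = v2 k - v1 k ∨ d = v3 k - v2 k ∨ d = v3 k - v1 k := by
  simp [Dset, diffs, mem_Gset, v1, v2, v3]

lemma Fset_finite (n : ℕ) : (Fset n).Finite :=
  ((Set.finite_Iic n).biUnion fun k _ => ({v1 k, v2 k, v3 k} : Set ℕ).toFinite).subset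
    fun m hm => by
      obtain ⟨k, hk, hm⟩ := mem_Fset.mp hm
      exact Set.mem_biUnion (Set.mem_Iic.mpr hk) (by simpa using hm)

lemma Dset_finite (n : ℕ) : (Dset n).Finite :=
  ((Set.finite_Iic n).biUnion fun k _ =>
      ({v2 k - v1 k, v3 k - v2 k, v3 k - v1 k} : Set ℕ).toFinite).subset
    fun d hd => by
      obtain ⟨k, hk, hd⟩ := mem_Dset.mp hd
      exact Set.mem_biUnion (Set.mem_Iic.mpr hk) (by simpa using hd)

lemma zero_mem_Fset (n : ℕ) : 0 ∈ Fset n := mem_Fset.mpr ⟨0, n.zero_le, Or.inl rfl⟩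

lemma zero_mem_Dset (n : ℕ) : 0 ∈ Dset n := mem_Dset.mpr ⟨0, n.zero_le, Or.inl rfl⟩

lemma Fset_subset_succ (n : ℕ) : Fset n ⊆ Fset (n + 1) := fun _ hm =>
  let ⟨k, hk, hm⟩ := mem_Fset.mp hm
  mem_Fset.mpr ⟨k, hk.trans n.le_succ, hm⟩

lemma Dset_subset_succ (n : ℕ) : Dset n ⊆ Dset (n + 1) := fun _ hd =>
  let ⟨k, hk, hd⟩ := mem_Dset.mp hd
  mem_Dset.mpr ⟨k, hk.trans n.le_succ, hd⟩

lemma mex_Dset_pos (n : ℕ) : 0 < mex (Dset n) := mex_pos (Dset_finite n) (zero_mem_Dset n)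

lemma mex_Dset_le_succ (n : ℕ) : mex (Dset n) ≤ mex (Dset (n + 1)) :=
  mex_mono (Dset_finite _) (Dset_subset_succ n)

lemma strictMono_v1 : StrictMono v1 := by
  refine strictMono_nat_of_lt_succ fun n => ?_
  cases n with
  | zero => exact mex_pos (Fset_finite 0) (zero_mem_Fset 0)
  | succ n =>
    have hmem : v1 (n + 1) ∈ Fset (n + 1) := mem_Fset.mpr ⟨n + 1, le_rfl, Or.inl rfl⟩
    exact (mex_mono (Fset_finite _) (Fset_subset_succ n)).lt_of_ne
      fun h => mex_notMem (Fset_finite (n + 1)) (h ▸ hmem)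

def excluded (n x : ℕ) : Set ℕ := (fun d => x + d) '' Dset n ∪ Set.Icc 1 x ∪ Fset n

lemma v2_succ (n : ℕ) : v2 (n + 1) = mex (excluded n (v1 (n + 1))) := rfl

lemma v3_succ (n : ℕ) : v3 (n + 1) = mex (excluded n (v2 (n + 1))) := rfl

section excluded

variable {n x : ℕ}

lemma excluded_finite : (excluded n x).Finite :=
  (((Dset_finite n).image _).union (Set.finite_Icc _ _)).union (Fset_finite n)

lemma add_mex_Dset_le_mex_excluded : x + mex (Dset n) ≤ mex (excluded n x) := by
  refine le_mex excluded_finite fun j hj => ?_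
  rcases Nat.eq_zero_or_pos j with rfl | hj0
  · exact Or.inr (zero_mem_Fset n)
  rcases le_or_gt j x with hjx | hxj
  · exact Or.inl (Or.inr ⟨hj0, hjx⟩)
  · exact Or.inl (Or.inl ⟨j - x, mem_of_lt_mex (by omega), show x + (j - x) = j by omega⟩)

lemma add_mex_Dset_notMem_excluded (hF : x + mex (Dset n) ∉ Fset n) :
    x + mex (Dset n) ∉ excluded n x := by
  rintro ((⟨d, hd, hdx⟩ | ⟨_, hx⟩) | hmem)
  · exact mex_notMem (Dset_finite n) (Nat.add_left_cancel hdx ▸ hd)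
  · have := mex_Dset_pos n
    omega
  · exact hF hmem

end excluded

lemma v1_succ_add_mex_Dset_le (n : ℕ) : v1 (n + 1) + mex (Dset n) ≤ v2 (n + 1) :=
  add_mex_Dset_le_mex_excluded

lemma mem_Dset_or_mem_Fset_of_lt_v2_succ {n e : ℕ} (he : 0 < e)
    (hlt : v1 (n + 1) + e < v2 (n + 1)) : e ∈ Dset n ∨ v1 (n + 1) + e ∈ Fset n := by
  rw [v2_succ] at hlt
  rcases mem_of_lt_mex hlt with (⟨d, hd, hde⟩ | ⟨_, hle⟩) | hF
  · exact Or.inl (Nat.add_left_cancel hde ▸ hd)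
  · omega
  · exact Or.inr hF

lemma v1_le_v2 (k : ℕ) : v1 k ≤ v2 k := by
  cases k with
  | zero => exact le_rfl
  | succ n => exact le_of_add_le_left (v1_succ_add_mex_Dset_le n)

lemma v2_le_v3 (k : ℕ) : v2 k ≤ v3 k := by
  cases k with
  | zero => exact le_rfl
  | succ n => exact le_of_add_le_left add_mex_Dset_le_mex_excluded

structure Invariant (n : ℕ) : Prop where
  v2_sub_v1_lt : ∀ k ≤ n, v2 k - v1 k < mex (Dset n)
  v3_sub_v2_lt : ∀ k ≤ n, v3 k - v2 k < mex (Dset n)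
  gap : ∀ j k, j < k → k ≤ n → v3 j - v1 j + 2 ≤ v3 k - v1 k
  isGreatest : IsGreatest (Fset n) (v3 n)

namespace Invariant

variable {n : ℕ}

lemma v2_add_two_le (h : Invariant n) {k : ℕ} (hk : k ≤ n) :
    v2 k + 2 ≤ v1 (n + 1) + mex (Dset n) := by
  have := h.v2_sub_v1_lt k hk
  have := strictMono_v1 (Nat.lt_add_one_of_le hk)
  have := v1_le_v2 k
  omega

lemma v3_add_three_le (h : Invariant n) {j k : ℕ} (hjk : j < k) (hk : k ≤ n) :
    v3 j + 3 ≤ v3 k := by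
  have := h.gap j k hjk hk
  have := strictMono_v1 hjk
  have := v1_le_v2 j
  have := v2_le_v3 j
  omega

lemma v3_eq_or_add_three_le (h : Invariant n) {i l : ℕ} (hi : i ≤ n) (hl : l ≤ n) :
    v3 i = v3 l ∨ v3 i + 3 ≤ v3 l ∨ v3 l + 3 ≤ v3 i := by
  rcases lt_trichotomy i l with hil | rfl | hli
  exacts [Or.inr (Or.inl (h.v3_add_three_le hil hl)), Or.inl rfl,
    Or.inr (Or.inr (h.v3_add_three_le hli hi))]

lemma v3_sub_v1_ne_add_one (h : Invariant n) {i l : ℕ} (hi : i ≤ n) (hl : l ≤ n) :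
    v3 l - v1 l ≠ v3 i - v1 i + 1 := by
  rcases lt_trichotomy i l with hil | rfl | hli
  · have := h.gap i l hil hl
    omega
  · omega
  · have := h.gap l i hli hi
    omega

lemma eq_v3_sub_v1_of_mem_Dset (h : Invariant n) {d : ℕ} (hd : d ∈ Dset n)
    (hμ : mex (Dset n) ≤ d) : ∃ k ≤ n, d = v3 k - v1 k := by
  obtain ⟨k, hk, rfl | rfl | rfl⟩ := mem_Dset.mp hd
  · exact absurd (h.v2_sub_v1_lt k hk) hμ.not_gt
  · exact absurd (h.v3_sub_v2_lt k hk) hμ.not_gt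
  · exact ⟨k, hk, rfl⟩

lemma eq_v3_of_mem_Fset (h : Invariant n) {x : ℕ} (hx : x ∈ Fset n)
    (hμ : v1 (n + 1) + mex (Dset n) ≤ x) : ∃ k ≤ n, x = v3 k := by
  obtain ⟨k, hk, rfl | rfl | rfl⟩ := mem_Fset.mp hx
  · have := strictMono_v1 (Nat.lt_add_one_of_le hk)
    omega
  · have := h.v2_add_two_le hk
    omega
  · exact ⟨k, hk, rfl⟩

lemma v3_lt_v2_succ_add (h : Invariant n) : v3 n < v2 (n + 1) + mex (Dset n) := by
  have := h.v2_add_two_le le_rfl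
  have := h.v3_sub_v2_lt n le_rfl
  have := v2_le_v3 n
  have := v1_succ_add_mex_Dset_le n
  omega

lemma v3_succ_eq (h : Invariant n) : v3 (n + 1) = v2 (n + 1) + mex (Dset n) := by
  rw [v3_succ]
  exact le_antisymm
    (mex_le_of_notMem (add_mex_Dset_notMem_excluded fun hF =>
      (h.isGreatest.2 hF).not_gt h.v3_lt_v2_succ_add))
    add_mex_Dset_le_mex_excluded

lemma v3_notMem_Ioo (h : Invariant n) {j : ℕ} (hj : j ≤ n) :
    v3 j ∉ Set.Ioo (v1 (n + 1) + mex (Dset n)) (v2 (n + 1)) := by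
  rintro ⟨hlo, hhi⟩
  have hμ := mex_Dset_pos n
  obtain ⟨i, hi, hi_eq⟩ : ∃ i ≤ n, v1 (n + 1) + mex (Dset n) = v3 i := by
    rcases mem_Dset_or_mem_Fset_of_lt_v2_succ hμ (hlo.trans hhi) with hD | hF
    · exact absurd hD (mex_notMem (Dset_finite n))
    · exact h.eq_v3_of_mem_Fset hF le_rfl
  have hij : v3 i + 3 ≤ v3 j := by
    rcases h.v3_eq_or_add_three_le hi hj with _ | _ | _ <;> omega
  have hdiff : ∀ t, 1 ≤ t → t ≤ 2 → ∃ k ≤ n, mex (Dset n) + t = v3 k - v1 k := by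
    intro t ht1 ht2
    refine h.eq_v3_sub_v1_of_mem_Dset ?_ (by omega)
    rcases mem_Dset_or_mem_Fset_of_lt_v2_succ (n := n) (e := mex (Dset n) + t) (by omega) (by omega)
      with hD | hF
    · exact hD
    · obtain ⟨l, hl, hl_eq⟩ := h.eq_v3_of_mem_Fset hF (by omega)
      rcases h.v3_eq_or_add_three_le hi hl with _ | _ | _ <;> omega
  obtain ⟨k₁, hk₁, e₁⟩ := hdiff 1 le_rfl one_le_two
  obtain ⟨k₂, hk₂, e₂⟩ := hdiff 2 one_le_two le_rfl
  exact h.v3_sub_v1_ne_add_one hk₁ hk₂ (by omega)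

lemma mem_Dset_or_eq_of_lt_v2_sub_v1 (h : Invariant n) {e : ℕ}
    (he : e < v2 (n + 1) - v1 (n + 1)) : e ∈ Dset n ∨ e = mex (Dset n) := by
  rcases Nat.eq_zero_or_pos e with rfl | he0
  · exact Or.inl (zero_mem_Dset n)
  rcases mem_Dset_or_mem_Fset_of_lt_v2_succ (n := n) he0 (by omega) with hD | hF
  · exact Or.inl hD
  rcases lt_trichotomy e (mex (Dset n)) with hlt | rfl | hgt
  · exact Or.inl (mem_of_lt_mex hlt)
  · exact Or.inr rfl
  · obtain ⟨k, hk, hke⟩ := h.eq_v3_of_mem_Fset hF (by omega)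
    exact absurd ⟨by omega, by omega⟩ (h.v3_notMem_Ioo hk)

lemma mex_Dset_mem_succ (h : Invariant n) : mex (Dset n) ∈ Dset (n + 1) :=
  mem_Dset.mpr ⟨n + 1, le_rfl, Or.inr (Or.inl (by rw [h.v3_succ_eq]; omega))⟩

lemma mex_Dset_lt_succ (h : Invariant n) : mex (Dset n) < mex (Dset (n + 1)) :=
  (mex_Dset_le_succ n).lt_of_ne fun he => mex_notMem (Dset_finite _) (he ▸ h.mex_Dset_mem_succ)

lemma v2_sub_v1_succ_lt (h : Invariant n) :
    v2 (n + 1) - v1 (n + 1) < mex (Dset (n + 1)) := by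
  refine Nat.lt_of_succ_le (le_mex (Dset_finite _) fun e he => ?_)
  rcases Nat.lt_add_one_iff_lt_or_eq.mp he with he | rfl
  · rcases h.mem_Dset_or_eq_of_lt_v2_sub_v1 he with hD | rfl
    exacts [Dset_subset_succ n hD, h.mex_Dset_mem_succ]
  · exact mem_Dset.mpr ⟨n + 1, le_rfl, Or.inl rfl⟩

lemma zero : Invariant 0 where
  v2_sub_v1_lt k hk := by
    obtain rfl := Nat.le_zero.mp hk
    exact mex_Dset_pos 0
  v3_sub_v2_lt k hk := by
    obtain rfl := Nat.le_zero.mp hk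
    exact mex_Dset_pos 0
  gap j k hjk hk := by omega
  isGreatest := by
    refine ⟨zero_mem_Fset 0, fun x hx => ?_⟩
    obtain ⟨k, hk, hx⟩ := mem_Fset.mp hx
    obtain rfl := Nat.le_zero.mp hk
    rcases hx with rfl | rfl | rfl <;> exact le_rfl

lemma succ (h : Invariant n) : Invariant (n + 1) where
  v2_sub_v1_lt k hk := by
    rcases Nat.le_add_one_iff.mp hk with hk | rfl
    · exact (h.v2_sub_v1_lt k hk).trans h.mex_Dset_lt_succ
    · exact h.v2_sub_v1_succ_lt
  v3_sub_v2_lt k hk := by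
    rcases Nat.le_add_one_iff.mp hk with hk | rfl
    · exact (h.v3_sub_v2_lt k hk).trans h.mex_Dset_lt_succ
    · rw [h.v3_succ_eq, Nat.add_sub_cancel_left]
      exact h.mex_Dset_lt_succ
  gap j k hjk hk := by
    rcases Nat.le_add_one_iff.mp hk with hk | rfl
    · exact h.gap j k hjk hk
    · have := h.v2_sub_v1_lt j (by omega)
      have := h.v3_sub_v2_lt j (by omega)
      have := v1_le_v2 j
      have := v2_le_v3 j
      have := h.v3_succ_eq
      have := v1_succ_add_mex_Dset_le n
      omega
  isGreatest := by
    refine ⟨mem_Fset.mpr ⟨n + 1, le_rfl, Or.inr (Or.inr rfl)⟩, fun x hx => ?_⟩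
    obtain ⟨k, hk, hx⟩ := mem_Fset.mp hx
    rcases Nat.le_add_one_iff.mp hk with hk | rfl
    · have := h.isGreatest.2 (mem_Fset.mpr ⟨k, hk, hx⟩)
      have := h.v3_lt_v2_succ_add
      have := h.v3_succ_eq
      omega
    · have := v1_le_v2 (n + 1)
      have := v2_le_v3 (n + 1)
      omega

end Invariant

theorem invariant : ∀ n, Invariant n
  | 0 => .zero
  | n + 1 => (invariant n).succ

theorem stmt5 : ∀ n : ℕ, 1 ≤ n →
    IsGreatest (Fset n) (v3 n) ∧ v3 n = v2 n + mex (Dset (n - 1)) := by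
  intro n hn
  obtain ⟨m, rfl⟩ := Nat.exists_eq_add_of_le' hn
  exact ⟨(invariant m).succ.isGreatest, (invariant m).v3_succ_eq⟩
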